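/- arXiv:2409.07565 — 4 statements merged into one kernel-verified Lean document; each statement's English description precedes it below -/
import Mathlib

section
/- Let g be a real number with 1 + 12g > 0 and g ≠ 0, and set a = (√(1+12g) − 1)/(6g) (so that 3g·a^2 + a − 1 = 0). Define a sequence (m_k)_{k≥0} of real numbers by m_k = 0 for all odd k, and m_{2ℓ} = a^ℓ · ((2ℓ)!/(ℓ!·(ℓ+2)!)) · (2ℓ + 2 − ℓ·a) for all ℓ ≥ 0 (in particular m_0 = 1). Then for every ℓ ≥ 0, m_{ℓ+1} + g·m_{ℓ+3} = Σ_{k=0}^{ℓ−1} m_k · m_{ℓ−1−k}. -/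
/-!
Odd moments vanish, so only odd `ℓ = 2n + 1` carries content, where the equation reads
`∑_{i+j=n} m_{2i} m_{2j} = m_{2n+2} + g m_{2n+4}`. With `β = (1 - a) / 3` the even moments are
`m_{2j} = a^j c_j`, where `c_j = (1 - β) C_j + β C_{j+1}` mixes consecutive Catalan numbers, and
`3 g a² + a = 1` says exactly `g a² = β` and `a = 1 - 3β`. The equation thus becomes
`∑_{i+j=n} c_i c_j = (1 - 3β) c_{n+1} + β c_{n+2}`, which follows from the Catalan recurrence
`C_{k+1} = ∑_{i+j=k} C_i C_j` at `k = n, n + 1, n + 2`.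
-/

open Finset Finset.Nat Nat

theorem catalan_add_two (n : ℕ) :
    catalan (n + 2) =
      ∑ p ∈ antidiagonal n, catalan p.1 * catalan (p.2 + 1) + catalan (n + 1) := by
  rw [catalan_succ', sum_antidiagonal_succ', catalan_zero, mul_one, add_comm]

theorem catalan_add_three (n : ℕ) :
    catalan (n + 3) =
      ∑ p ∈ antidiagonal n, catalan (p.1 + 1) * catalan (p.2 + 1) + 2 * catalan (n + 2) := by
  rw [catalan_succ', sum_antidiagonal_succ, sum_antidiagonal_succ', catalan_zero, one_mul,
    mul_one]
  ring

def catalanMix {R : Type*} [CommRing R] (β : R) (j : ℕ) : R :=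
  (1 - β) * catalan j + β * catalan (j + 1)

theorem sum_antidiagonal_catalanMix_mul {R : Type*} [CommRing R] (β : R) (n : ℕ) :
    ∑ p ∈ antidiagonal n, catalanMix β p.1 * catalanMix β p.2 =
      (1 - 3 * β) * catalanMix β (n + 1) + β * catalanMix β (n + 2) := by
  have h1 := congrArg (Nat.cast (R := R)) (catalan_succ' n)
  have h2 := congrArg (Nat.cast (R := R)) (catalan_add_two n)
  have h3 := congrArg (Nat.cast (R := R)) (catalan_add_three n)
  have hswap : ∑ p ∈ antidiagonal n, (catalan (p.1 + 1) : R) * catalan p.2 =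
      ∑ p ∈ antidiagonal n, (catalan p.1 : R) * catalan (p.2 + 1) := by
    rw [← sum_antidiagonal_swap]; simp only [Prod.fst_swap, Prod.snd_swap, mul_comm]
  push_cast at h1 h2 h3
  simp only [catalanMix, mul_add, add_mul, sum_add_distrib, show n + 2 + 1 = n + 3 from rfl]
  simp only [mul_mul_mul_comm _ (catalan _ : R), ← mul_sum, hswap]
  linear_combination -(1 - β) ^ 2 * h1 - 2 * β * (1 - β) * h2 - β ^ 2 * h3

theorem catalan_mul_factorial_mul_factorial_succ (n : ℕ) :
    catalan n * n ! * (n + 1)! = (2 * n)! := by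
  have h := Nat.choose_mul_factorial_mul_factorial (show n ≤ 2 * n by omega)
  rw [show 2 * n - n = n by omega, ← centralBinom_eq_two_mul_choose,
    ← succ_mul_catalan_eq_centralBinom] at h
  rw [← h, factorial_succ]
  ring

theorem add_two_mul_catalan_succ (n : ℕ) :
    (n + 2) * catalan (n + 1) = 2 * (2 * n + 1) * catalan n := by
  have h := succ_mul_centralBinom_succ n
  rw [← succ_mul_catalan_eq_centralBinom, ← succ_mul_catalan_eq_centralBinom] at h
  apply Nat.eq_of_mul_eq_mul_left (show 0 < n + 1 by omega)
  linear_combination h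

theorem factorial_two_mul_div_mul_eq_catalanMix {K : Type*} [Field K] [CharZero K] (a : K)
    (j : ℕ) :
    ((2 * j)! : K) / (j ! * (j + 2)!) * (2 * j + 2 - j * a) = catalanMix ((1 - a) / 3) j := by
  have hfac : ((2 * j)! : K) = catalan j * j ! * (j + 1)! := by
    exact_mod_cast (catalan_mul_factorial_mul_factorial_succ j).symm
  have hj : (j : K) + 2 ≠ 0 := by exact_mod_cast (j + 1).succ_ne_zero
  have hrec : (catalan (j + 1) : K) = 2 * (2 * j + 1) * catalan j / (j + 2) := by
    rw [eq_div_iff hj, mul_comm]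
    exact_mod_cast add_two_mul_catalan_succ j
  have hj! : (j ! : K) ≠ 0 := by exact_mod_cast factorial_ne_zero j
  have hj1! : ((j + 1)! : K) ≠ 0 := by exact_mod_cast factorial_ne_zero (j + 1)
  rw [hfac, catalanMix, hrec, factorial_succ (j + 1)]
  push_cast [show (j : K) + 1 + 1 = j + 2 by ring]
  field_simp
  ring

section EvenSupported

variable {R : Type*} [NonUnitalNonAssocSemiring R] {m : ℕ → R}

theorem sum_antidiagonal_two_mul_add_one_of_forall_odd_eq_zero (hodd : ∀ k, Odd k → m k = 0)
    (n : ℕ) :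
    ∑ p ∈ antidiagonal (2 * n + 1), m p.1 * m p.2 = 0 := by
  refine sum_eq_zero fun p hp => ?_
  rw [HasAntidiagonal.mem_antidiagonal] at hp
  rcases Nat.even_or_odd p.1 with h | h
  · rw [hodd p.2 (by grind), mul_zero]
  · rw [hodd p.1 h, zero_mul]

theorem sum_antidiagonal_two_mul_of_forall_odd_eq_zero (hodd : ∀ k, Odd k → m k = 0) (n : ℕ) :
    ∑ p ∈ antidiagonal (2 * n), m p.1 * m p.2 =
      ∑ p ∈ antidiagonal n, m (2 * p.1) * m (2 * p.2) := by
  have hinj : Set.InjOn (fun p : ℕ × ℕ => (2 * p.1, 2 * p.2)) (antidiagonal n) := by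
    intro p _ q _ h
    simp only [Prod.mk.injEq] at h
    ext <;> omega
  rw [← sum_image (f := fun p => m p.1 * m p.2) hinj]
  symm
  apply sum_subset
  · intro p hp
    simp only [mem_image, HasAntidiagonal.mem_antidiagonal] at hp ⊢
    obtain ⟨q, hq, rfl⟩ := hp
    omega
  · intro p hp hnot
    rw [HasAntidiagonal.mem_antidiagonal] at hp
    rcases Nat.even_or_odd p.1 with ⟨i, hi⟩ | h
    · have : p ∈ (antidiagonal n).image fun p : ℕ × ℕ => (2 * p.1, 2 * p.2) := by
        simp only [mem_image, HasAntidiagonal.mem_antidiagonal]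
        exact ⟨(i, n - i), by omega, by ext <;> dsimp only <;> omega⟩
      exact absurd this hnot
    · rw [hodd p.1 h, zero_mul]

end EvenSupported

theorem three_mul_mul_sq_add_sub_one_eq_zero {g a : ℝ} (hdisc : 0 ≤ 1 + 12 * g) (hg : g ≠ 0)
    (ha : a = (√(1 + 12 * g) - 1) / (6 * g)) : 3 * g * a ^ 2 + a - 1 = 0 := by
  have hdiscrim : discrim (3 * g) 1 (-1) = √(1 + 12 * g) * √(1 + 12 * g) := by
    rw [Real.mul_self_sqrt hdisc, discrim]
    ring
  have hroot := (quadratic_eq_zero_iff (by positivity) hdiscrim a).mpr (.inl (by rw [ha]; ring))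
  linear_combination hroot

/-- The explicit moment sequence of the quartic one-matrix model solves the
large-N Schwinger–Dyson equations. -/
theorem stmt_3 (g : ℝ) (hg₁ : 1 + 12 * g > 0) (hg₂ : g ≠ 0) (a : ℝ)
    (ha : a = (Real.sqrt (1 + 12 * g) - 1) / (6 * g))
    (m : ℕ → ℝ)
    (hodd : ∀ k, Odd k → m k = 0)
    (heven : ∀ ℓ : ℕ, m (2 * ℓ) =
      a ^ ℓ * ((Nat.factorial (2 * ℓ) : ℝ) /
        ((Nat.factorial ℓ : ℝ) * (Nat.factorial (ℓ + 2) : ℝ))) *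
        (2 * (ℓ : ℝ) + 2 - (ℓ : ℝ) * a)) :
    ∀ ℓ : ℕ, m (ℓ + 1) + g * m (ℓ + 3) =
      ∑ k ∈ Finset.range ℓ, m k * m (ℓ - 1 - k) := by
  have hquad := three_mul_mul_sq_add_sub_one_eq_zero hg₁.le hg₂ ha
  have hmoment (j : ℕ) : m (2 * j) = a ^ j * catalanMix ((1 - a) / 3) j := by
    rw [heven, mul_assoc, factorial_two_mul_div_mul_eq_catalanMix]
  have hconv (n : ℕ) : ∑ p ∈ antidiagonal n, m (2 * p.1) * m (2 * p.2) = a ^ n *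
      ∑ p ∈ antidiagonal n, catalanMix ((1 - a) / 3) p.1 * catalanMix ((1 - a) / 3) p.2 := by
    rw [mul_sum]
    refine sum_congr rfl fun p hp => ?_
    rw [← HasAntidiagonal.mem_antidiagonal.mp hp, hmoment, hmoment, pow_add]
    ring
  rintro (_ | ℓ)
  · simp [hodd 1 odd_one, hodd 3 (by decide)]
  simp only [Nat.add_sub_cancel, ← sum_antidiagonal_eq_sum_range_succ (fun i j => m i * m j)]
  obtain ⟨n, rfl | rfl⟩ := Nat.even_or_odd' ℓ
  · rw [sum_antidiagonal_two_mul_of_forall_odd_eq_zero hodd, hconv,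
      sum_antidiagonal_catalanMix_mul, show 2 * n + 1 + 1 = 2 * (n + 1) by ring,
      show 2 * n + 1 + 3 = 2 * (n + 2) by ring, hmoment, hmoment]
    linear_combination a ^ n * catalanMix ((1 - a) / 3) (n + 2) / 3 * hquad
  · rw [sum_antidiagonal_two_mul_add_one_of_forall_odd_eq_zero hodd, hodd _ ⟨n + 1, by ring⟩,
      hodd _ ⟨n + 2, by ring⟩]
    ring
end

section
/- For a real number g with 1 + 12g > 0 and g ≠ 0, set a(g) = (√(1+12g) − 1)/(6g) and m_2(g) = (4·a(g) − a(g)^2)/3. Then lim_{g → (−1/12)^+} ( m_2(g) − 4/3 + 16·(g + 1/12) ) / (g + 1/12)^{3/2} = 64·√3. In other words, m_2(g) = 4/3 − 16·(g − g_c) + 64√3·(g − g_c)^{3/2} + o((g−g_c)^{3/2}) as g → g_c^+, where g_c = −1/12. -/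
open Filter Topology Real

/-! In terms of `s = √(1 + 12 g)`, which tends to `0` as `g → -1/12⁺`, one has `g = (s² - 1)/12`,
`a = 2/(s + 1)` and `(g + 1/12)^{3/2} = s³/(24√3)`. The numerator of the quotient is then
`(4/3) s³ (s + 2)/(s + 1)²`, so the quotient equals `32√3 (s + 2)/(s + 1)²`, which is continuous
in `s` with value `64√3` at `s = 0`. -/

noncomputable def quarticA (g : ℝ) : ℝ := (√(1 + 12 * g) - 1) / (6 * g)

noncomputable def secondMoment (g : ℝ) : ℝ := (4 * quarticA g - quarticA g ^ 2) / 3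

lemma quarticA_eq {g : ℝ} (hg : g ≠ 0) (h : 0 ≤ 1 + 12 * g) :
    quarticA g = 2 / (√(1 + 12 * g) + 1) := by
  have hs : √(1 + 12 * g) ^ 2 = 1 + 12 * g := sq_sqrt h
  rw [quarticA, div_eq_div_iff (by positivity) (by positivity)]
  linear_combination hs

lemma secondMoment_sub_linear_eq {g : ℝ} (hg : g ≠ 0) (h : 0 ≤ 1 + 12 * g) :
    secondMoment g - 4 / 3 + 16 * (g + 1 / 12) =
      4 / 3 * √(1 + 12 * g) ^ 3 * (√(1 + 12 * g) + 2) / (√(1 + 12 * g) + 1) ^ 2 := by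
  have hs : √(1 + 12 * g) ^ 2 = 1 + 12 * g := sq_sqrt h
  rw [secondMoment, quarticA_eq hg h, show g + 1 / 12 = √(1 + 12 * g) ^ 2 / 12 by linarith]
  field_simp
  ring

lemma rpow_three_halves_add_eq {g : ℝ} (h : 0 ≤ 1 + 12 * g) :
    (g + 1 / 12) ^ ((3 : ℝ) / 2) = √(1 + 12 * g) ^ 3 / (24 * √3) := by
  have hsqrt : √(g + 1 / 12) = √(1 + 12 * g) / (2 * √3) := by
    rw [show g + 1 / 12 = (1 + 12 * g) / (2 ^ 2 * 3) by ring, sqrt_div h, sqrt_mul (by norm_num),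
      sqrt_sq (by norm_num)]
  have h3 : √3 ^ 2 = 3 := sq_sqrt (by norm_num)
  rw [rpow_div_two_eq_sqrt _ (by linarith), rpow_ofNat, hsqrt, div_pow, mul_pow,
    pow_succ √3 2, h3]
  ring

lemma secondMoment_quotient_eq {g : ℝ} (hg : g ≠ 0) (h : 0 < 1 + 12 * g) :
    (secondMoment g - 4 / 3 + 16 * (g + 1 / 12)) / (g + 1 / 12) ^ ((3 : ℝ) / 2) =
      32 * √3 * (√(1 + 12 * g) + 2) / (√(1 + 12 * g) + 1) ^ 2 := by
  have hs : 0 < √(1 + 12 * g) := sqrt_pos.mpr h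
  rw [secondMoment_sub_linear_eq hg h.le, rpow_three_halves_add_eq h.le]
  field_simp
  ring

lemma tendsto_sqrt_one_add_twelve_mul :
    Tendsto (fun g : ℝ => √(1 + 12 * g)) (𝓝 (-1 / 12)) (𝓝 0) := by
  have hc : Continuous (fun g : ℝ => √(1 + 12 * g)) := by fun_prop
  convert hc.tendsto (-1 / 12)
  norm_num

/-- Asymptotic expansion of the second moment of the quartic one-matrix model
at the critical point g_c = -1/12:
m₂(g) = 4/3 − 16(g − g_c) + 64√3 (g − g_c)^{3/2} + o((g − g_c)^{3/2}). -/
theorem stmt_5 :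
    Filter.Tendsto
      (fun g : ℝ =>
        ((4 * ((Real.sqrt (1 + 12 * g) - 1) / (6 * g)) -
            ((Real.sqrt (1 + 12 * g) - 1) / (6 * g)) ^ 2) / 3
          - 4 / 3 + 16 * (g + 1 / 12)) / (g + 1 / 12) ^ ((3 : ℝ) / 2))
      (𝓝[>] (-1 / 12))
      (𝓝 (64 * Real.sqrt 3)) := by
  show Tendsto (fun g => (secondMoment g - 4 / 3 + 16 * (g + 1 / 12)) / (g + 1 / 12) ^ ((3 : ℝ) / 2))
    (𝓝[>] (-1 / 12)) (𝓝 (64 * √3))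
  have hF : ContinuousAt (fun s : ℝ => 32 * √3 * (s + 2) / (s + 1) ^ 2) 0 :=
    ContinuousAt.div (by fun_prop) (by fun_prop) (by norm_num)
  have hlim := (hF.tendsto.comp tendsto_sqrt_one_add_twelve_mul).mono_left
    (nhdsWithin_le_nhds (s := Set.Ioi (-1 / 12 : ℝ)))
  rw [show 32 * √3 * (0 + 2) / (0 + 1) ^ 2 = 64 * √3 by ring] at hlim
  refine hlim.congr' ?_
  filter_upwards [Ioo_mem_nhdsGT (show (-1 / 12 : ℝ) < 0 by norm_num)] with g ⟨hg₁, hg₂⟩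
  exact (secondMoment_quotient_eq hg₂.ne (by linarith)).symm
end

section
/- There is no nonzero real number c such that the function h_c(g) = −2c·(−1 + √(1 − g/c))/g (defined for g ≠ 0 near 0 with g/c < 1) satisfies h_c(g) = 1 − 4g + 36g^2 + o(g^2) as g → 0. Equivalently, for every nonzero real c the quantity (h_c(g) − (1 − 4g + 36g^2))/g^2 does not tend to 0 as g → 0. -/
/-!
Writing `s = √(1 - g/c)`, so that `g = c (1 - s²)`, the ansatz simplifies to `2 / (1 + s)`, whose
expansion at `g = 0` is `1 + g/(4c) + g²/(8c²) + o(g²)`. Matching the coefficient of `g` with `-4`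
forces `c = -1/16`, and then the coefficient of `g²` is `2 · (1/(4c))² = 32 ≠ 36`.
-/

open Filter Topology

section TaylorCoeffs

variable {𝕜 : Type*} [NontriviallyNormedField 𝕜]

theorem quadratic_coeffs_eq_zero_of_tendsto {a b c : 𝕜}
    (h : Tendsto (fun x => (a + b * x + c * x ^ 2) / x ^ 2) (𝓝[≠] 0) (𝓝 0)) :
    a = 0 ∧ b = 0 ∧ c = 0 := by
  have hx : Tendsto (fun x : 𝕜 => x) (𝓝[≠] 0) (𝓝 0) := tendsto_nhdsWithin_of_tendsto_nhds tendsto_id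
  have ha : a = 0 := by
    have hlim : Tendsto (fun x => x ^ 2 * ((a + b * x + c * x ^ 2) / x ^ 2)) (𝓝[≠] 0) (𝓝 0) := by
      simpa using (hx.pow 2).mul h
    have hlim' : Tendsto (fun x => a + b * x + c * x ^ 2) (𝓝[≠] 0) (𝓝 a) :=
      tendsto_nhdsWithin_of_tendsto_nhds
        ((show Continuous fun x : 𝕜 => a + b * x + c * x ^ 2 by fun_prop).tendsto' 0 a (by simp))
    refine tendsto_nhds_unique (hlim'.congr' ?_) hlim
    filter_upwards [self_mem_nhdsWithin] with x (hx0 : x ≠ 0)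
    field_simp
  subst ha
  have hb : b = 0 := by
    have hlim : Tendsto (fun x => x * ((0 + b * x + c * x ^ 2) / x ^ 2)) (𝓝[≠] 0) (𝓝 0) := by
      simpa using hx.mul h
    have hlim' : Tendsto (fun x => b + c * x) (𝓝[≠] 0) (𝓝 b) :=
      tendsto_nhdsWithin_of_tendsto_nhds
        ((show Continuous fun x : 𝕜 => b + c * x by fun_prop).tendsto' 0 b (by simp))
    refine tendsto_nhds_unique (hlim'.congr' ?_) hlim
    filter_upwards [self_mem_nhdsWithin] with x (hx0 : x ≠ 0)
    field_simp
    ring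
  subst hb
  refine ⟨rfl, rfl, tendsto_nhds_unique (tendsto_const_nhds.congr' ?_) h⟩
  filter_upwards [self_mem_nhdsWithin] with x (hx0 : x ≠ 0)
  field_simp
  ring

theorem taylor2_coeffs_unique {f : 𝕜 → 𝕜} {a₀ a₁ a₂ b₀ b₁ b₂ : 𝕜}
    (ha : Tendsto (fun x => (f x - (a₀ + a₁ * x + a₂ * x ^ 2)) / x ^ 2) (𝓝[≠] 0) (𝓝 0))
    (hb : Tendsto (fun x => (f x - (b₀ + b₁ * x + b₂ * x ^ 2)) / x ^ 2) (𝓝[≠] 0) (𝓝 0)) :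
    a₀ = b₀ ∧ a₁ = b₁ ∧ a₂ = b₂ := by
  have hdiff := (hb.sub ha).congr fun x => show _ = ((a₀ - b₀) + (a₁ - b₁) * x
      + (a₂ - b₂) * x ^ 2) / x ^ 2 by ring
  obtain ⟨h₀, h₁, h₂⟩ := quadratic_coeffs_eq_zero_of_tendsto (by simpa using hdiff)
  exact ⟨sub_eq_zero.mp h₀, sub_eq_zero.mp h₁, sub_eq_zero.mp h₂⟩

end TaylorCoeffs

noncomputable def sqrtAnsatz (c g : ℝ) : ℝ := -2 * c * (-1 + Real.sqrt (1 - g / c)) / g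

theorem sqrtAnsatz_eq {c g : ℝ} (hc : c ≠ 0) (hg : g ≠ 0) (hpos : 0 ≤ 1 - g / c) :
    sqrtAnsatz c g = 1 + 1 / (4 * c) * g + 1 / (8 * c ^ 2) * g ^ 2 +
      g ^ 2 * ((3 + √(1 - g / c)) / (4 * c ^ 2 * (1 + √(1 - g / c)) ^ 3) - 1 / (8 * c ^ 2)) := by
  unfold sqrtAnsatz
  set s := √(1 - g / c) with hs
  have hgs : g = c * (1 - s ^ 2) := by
    rw [hs, Real.sq_sqrt hpos]
    field_simp
    ring
  have hs1 : 1 - s ^ 2 ≠ 0 := right_ne_zero_of_mul (hgs ▸ hg)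
  have hs0 : 1 + s ≠ 0 := by positivity
  rw [hgs]
  field_simp
  ring

theorem tendsto_sqrtAnsatz_taylor2 {c : ℝ} (hc : c ≠ 0) :
    Tendsto (fun g => (sqrtAnsatz c g - (1 + 1 / (4 * c) * g + 1 / (8 * c ^ 2) * g ^ 2)) / g ^ 2)
      (𝓝[≠] 0) (𝓝 0) := by
  have hpos : ∀ᶠ g in 𝓝 (0 : ℝ), 0 ≤ 1 - g / c :=
    ((by fun_prop : Continuous fun g : ℝ => 1 - g / c).tendsto 0).eventually
      (eventually_ge_nhds (by norm_num))
  have hrem : Continuous fun g : ℝ =>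
      (3 + √(1 - g / c)) / (4 * c ^ 2 * (1 + √(1 - g / c)) ^ 3) - 1 / (8 * c ^ 2) := by
    refine Continuous.sub (Continuous.div (by fun_prop) (by fun_prop) fun g => ?_) (by fun_prop)
    have : 0 < 1 + √(1 - g / c) := by positivity
    positivity
  have hrem0 : (3 + √(1 - 0 / c)) / (4 * c ^ 2 * (1 + √(1 - 0 / c)) ^ 3) - 1 / (8 * c ^ 2) = 0 := by
    rw [zero_div, sub_zero, Real.sqrt_one]
    field_simp
    norm_num
  refine (tendsto_nhdsWithin_of_tendsto_nhds (hrem0 ▸ hrem.tendsto 0)).congr' ?_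
  filter_upwards [self_mem_nhdsWithin, nhdsWithin_le_nhds hpos] with g (hg : g ≠ 0) hg'
  rw [sqrtAnsatz_eq hc hg hg']
  field_simp
  ring

/-- No choice of the constant c makes the square-root ansatz
h_c(g) = −2c(−1 + √(1 − g/c))/g consistent with the expansion
m₂ = 1 − 4g + 36g² + o(g²) at g = 0. -/
theorem stmt_10 (c : ℝ) (hc : c ≠ 0) :
    ¬ Filter.Tendsto
      (fun g : ℝ =>
        ((-2 * c * (-1 + Real.sqrt (1 - g / c)) / g) -
          (1 - 4 * g + 36 * g ^ 2)) / g ^ 2)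
      (𝓝[≠] 0) (𝓝 0) := by
  intro h
  obtain ⟨-, h₁, h₂⟩ := taylor2_coeffs_unique (tendsto_sqrtAnsatz_taylor2 hc)
    (f := sqrtAnsatz c) (b₀ := 1) (b₁ := -4) (b₂ := 36) (h.congr fun g => by unfold sqrtAnsatz; ring)
  have hsq : 1 / (8 * c ^ 2) = 2 * (1 / (4 * c)) ^ 2 := by
    field_simp
    ring
  rw [hsq, h₁] at h₂
  norm_num at h₂
end

section
/- Let g ≠ 0 and m_2 be real numbers, and define m_4 = (1 − m_2 + 4g·m_2^2)/(4g), v = (1 − m_2)/(4g), w = (1 − m_2 − 4g·m_2^2)/(4g), m_6 = (12g^2·m_2^3 − 12g·m_2^2 + 16g·m_2 + m_2 − 1)/(16g^2), u_1 = (−4g^2·m_2^3 − 4g·m_2^2 + 8g·m_2 + m_2 − 1)/(16g^2), u_2 = (−4g^2·m_2^3 + 4g·m_2^2 + m_2 − 1)/(16g^2), and u_3 = (12g^2·m_2^3 + 4g·m_2^2 + m_2 − 1)/(16g^2). Then the following four identities hold: (i) 1 − m_2 − g·m_4 − 2g·v − g·w = 0; (ii) 2m_2 − m_4 − g·m_6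 − 2g·u_1 − g·u_2 = 0; (iii) m_2 − v − 2g·u_1 − g·u_2 − g·u_3 = 0; (iv) −w − 3g·u_2 − g·u_3 = 0. -/
/-- The explicit formulas for the moments of the (g,g,g) 2-matrix model in
terms of g and m₂ solve the degree-one and degree-three Schwinger–Dyson
equations (insertions A, A³, AB², BAB). -/
theorem stmt_12 (g m2 m4 v w m6 u1 u2 u3 : ℝ) (hg : g ≠ 0)
    (hm4 : m4 = (1 - m2 + 4 * g * m2 ^ 2) / (4 * g))
    (hv : v = (1 - m2) / (4 * g))
    (hw : w = (1 - m2 - 4 * g * m2 ^ 2) / (4 * g))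
    (hm6 : m6 = (12 * g ^ 2 * m2 ^ 3 - 12 * g * m2 ^ 2 + 16 * g * m2 + m2 - 1) /
      (16 * g ^ 2))
    (hu1 : u1 = (-4 * g ^ 2 * m2 ^ 3 - 4 * g * m2 ^ 2 + 8 * g * m2 + m2 - 1) /
      (16 * g ^ 2))
    (hu2 : u2 = (-4 * g ^ 2 * m2 ^ 3 + 4 * g * m2 ^ 2 + m2 - 1) / (16 * g ^ 2))
    (hu3 : u3 = (12 * g ^ 2 * m2 ^ 3 + 4 * g * m2 ^ 2 + m2 - 1) / (16 * g ^ 2)) :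
    1 - m2 - g * m4 - 2 * g * v - g * w = 0 ∧
    2 * m2 - m4 - g * m6 - 2 * g * u1 - g * u2 = 0 ∧
    m2 - v - 2 * g * u1 - g * u2 - g * u3 = 0 ∧
    -w - 3 * g * u2 - g * u3 = 0 := by
  subst hm4 hv hw hm6 hu1 hu2 hu3
  refine ⟨?_, ?_, ?_, ?_⟩ <;> field_simp <;> ring
end
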